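/- Let G be a nontrivial finite abelian group and let S be a zero-sum free sequence over G with k(S) = k(G). Then the set of subsums of S is exactly the set of nonzero elements of G: Σ(S) = G ∖ {0}. -/

import Mathlib

/-!
If some nonzero `x` were not a subsum of `S`, then `-x` could be appended to `S` without creating
a zero-sum subsequence, raising the cross number by `1 / ord(x) > 0` beyond `k(G)`. That `k(G)` is
a genuine maximum, i.e. an upper bound of the cross numbers of zero-sum free sequences, follows
from `k(S) ≤ |S| < |G|`: the `|S| + 1` prefix sums of a zero-sum free sequence are pairwise
distinct.
-/

/-- The cross number `k(S)` of a sequence (finite multiset) `S` over an additive group: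
the sum, with multiplicity, of the reciprocals of the orders of its elements. -/
noncomputable def crossNum {G : Type*} [AddCommGroup G] (S : Multiset G) : ℝ :=
  (S.map fun g => ((addOrderOf g : ℝ))⁻¹).sum

/-- `S` is zero-sum free: no nonempty sub-multiset of `S` has sum `0`. -/
def IsZeroSumFree {G : Type*} [AddCommGroup G] (S : Multiset G) : Prop :=
  ∀ T : Multiset G, T ≤ S → T ≠ 0 → T.sum ≠ 0

/-- The little cross number `k(G)`: the maximal cross number of a zero-sum free
sequence over `G`. -/
noncomputable def littleK (G : Type*) [AddCommGroup G] : ℝ :=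
  sSup {x : ℝ | ∃ S : Multiset G, IsZeroSumFree S ∧ crossNum S = x}

/-- The set of subsums of a sequence `S`: sums of nonempty sub-multisets of `S`. -/
def subsums {G : Type*} [AddCommGroup G] (S : Multiset G) : Set G :=
  {x | ∃ T : Multiset G, T ≤ S ∧ T ≠ 0 ∧ T.sum = x}

section

variable {G : Type*} [AddCommGroup G]

lemma injOn_sum_take_of_isZeroSumFree {L : List G} (hL : IsZeroSumFree (L : Multiset G)) :
    Set.InjOn (fun i => (L.take i).sum) (Set.Iic L.length) := by
  suffices key : ∀ i j, i < j → j ≤ L.length → (L.take i).sum ≠ (L.take j).sum by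
    intro i _ j hj hij
    by_contra hne
    rcases lt_or_gt_of_ne hne with h | h
    · exact key i j h hj hij
    · exact key j i h (by simp_all) hij.symm
  intro i j hij hj heq
  set M := (L.drop i).take (j - i)
  have hsplit : L.take j = L.take i ++ M := by
    rw [← List.take_add, Nat.add_sub_cancel' hij.le]
  have hM_sum : M.sum = 0 := by
    rwa [hsplit, List.sum_append, left_eq_add] at heq
  have hM_ne : M ≠ [] := by
    simp only [M, ne_eq, List.take_eq_nil_iff, List.drop_eq_nil_iff]
    omega
  have hM_le : (M : Multiset G) ≤ L :=
    Multiset.coe_le.mpr ((List.take_sublist _ _).trans (List.drop_sublist _ _)).subperm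
  exact hL M hM_le (by simpa using hM_ne) (by simpa using hM_sum)

lemma IsZeroSumFree.card_lt [Finite G] {S : Multiset G} (hS : IsZeroSumFree S) :
    Multiset.card S < Nat.card G := by
  rw [← Multiset.coe_toList S] at hS
  have hinj : Function.Injective fun i : Fin (Multiset.card S + 1) => (S.toList.take i).sum :=
    fun i j hij => Fin.ext <| injOn_sum_take_of_isZeroSumFree hS
      (by simpa using Nat.lt_succ_iff.mp i.2) (by simpa using Nat.lt_succ_iff.mp j.2) hij
  simpa using Nat.card_le_card_of_injective _ hinj

lemma crossNum_le_card (S : Multiset G) : crossNum S ≤ Multiset.card S := by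
  have hle : ∀ x ∈ S.map fun g => ((addOrderOf g : ℝ))⁻¹, x ≤ 1 := by
    simp only [Multiset.mem_map, forall_exists_index, and_imp, forall_apply_eq_imp_iff₂]
    exact fun g _ => Nat.cast_inv_le_one _
  simpa [crossNum] using Multiset.sum_le_card_nsmul _ _ hle

lemma crossNum_le_littleK [Finite G] {S : Multiset G} (hS : IsZeroSumFree S) :
    crossNum S ≤ littleK G := by
  refine le_csSup ⟨Nat.card G, ?_⟩ ⟨S, hS, rfl⟩
  rintro _ ⟨T, hT, rfl⟩
  exact (crossNum_le_card T).trans (by exact_mod_cast hT.card_lt.le)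

lemma crossNum_cons (g : G) (S : Multiset G) :
    crossNum (g ::ₘ S) = (addOrderOf g : ℝ)⁻¹ + crossNum S := by
  simp [crossNum]

lemma IsZeroSumFree.neg_cons {S : Multiset G} (hS : IsZeroSumFree S) {x : G} (hx : x ≠ 0)
    (hxS : x ∉ subsums S) : IsZeroSumFree (-x ::ₘ S) := by
  intro T hT hT0 hsum
  by_cases hmem : -x ∈ T
  · obtain ⟨U, rfl⟩ := Multiset.exists_cons_of_mem hmem
    have hU : U.sum = x := by
      rwa [Multiset.sum_cons, neg_add_eq_zero, eq_comm] at hsum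
    rcases eq_or_ne U 0 with rfl | hU0
    · exact hx (by simpa using hU.symm)
    · exact hxS ⟨U, (Multiset.cons_le_cons_iff _).mp hT, hU0, hU⟩
  · exact hS T ((Multiset.le_cons_of_notMem hmem).mp hT) hT0 hsum

end

theorem subsums_eq_nonzero_of_maximal_crossNum_general
    (G : Type*) [AddCommGroup G] [Finite G]
    (S : Multiset G) (hS : IsZeroSumFree S) (hmax : crossNum S = littleK G) :
    subsums S = {x : G | x ≠ 0} := by
  refine Set.Subset.antisymm (fun x ⟨T, hTS, hT0, hTx⟩ => hTx ▸ hS T hTS hT0) fun x hx => ?_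
  by_contra hxS
  have hle := crossNum_le_littleK (hS.neg_cons hx hxS)
  have hpos : (0 : ℝ) < (addOrderOf (-x) : ℝ)⁻¹ := by
    have := addOrderOf_pos (-x)
    positivity
  rw [crossNum_cons, ← hmax] at hle
  linarith

/-- If `G` is a nontrivial finite abelian group and `S` is a zero-sum free sequence
over `G` with `k(S) = k(G)`, then `Σ(S) = G ∖ {0}`. -/
theorem subsums_eq_nonzero_of_maximal_crossNum
    (G : Type*) [AddCommGroup G] [Finite G] [Nontrivial G]
    (S : Multiset G) (hS : IsZeroSumFree S) (hmax : crossNum S = littleK G) :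
    subsums S = {x : G | x ≠ 0} :=
  subsums_eq_nonzero_of_maximal_crossNum_general G S hS hmax
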